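/- For all a > 0 and x > 0, the integral over t in (0, ∞) of cos(a t) / (x² + t²) dt equals (π / (2x)) · e^{-a x}. -/

import Mathlib

open Real MeasureTheory

/-!
For `|Re b| < c`, splitting `ℝ` at `0` evaluates `∫ e^{bt - c|t|} dt = 2c / (c² - b²)`, so the
Fourier transform of `e^{-c|t|}` is `2c / (c² + 4π²w²)`. With `c = 2πx` this is
`x / (π (x² + w²))`, which is integrable, so Fourier inversion at `a / 2π` gives
`∫ e^{iat} x / (π (x² + t²)) dt = e^{-x|a|}`. Taking real parts and halving the integral of the
even integrand yields the claim.
-/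

open Set FourierTransform
open Complex (I)
open scoped Complex

section TwoSidedExponential

variable {c : ℝ} {b : ℂ}

lemma cexp_mul_sub_mul_abs_of_pos {t : ℝ} (ht : 0 < t) :
    cexp (b * t - c * |t|) = cexp ((b - c) * t) := by
  rw [abs_of_pos ht, sub_mul]

lemma cexp_mul_sub_mul_abs_of_nonpos {t : ℝ} (ht : t ≤ 0) :
    cexp (b * t - c * |t|) = cexp ((b + c) * t) := by
  rw [abs_of_nonpos ht, add_mul, Complex.ofReal_neg, mul_neg, sub_neg_eq_add]

lemma integrableOn_Ioi_cexp_mul_sub_mul_abs (hb : |b.re| < c) :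
    IntegrableOn (fun t : ℝ => cexp (b * t - c * |t|)) (Ioi 0) :=
  (integrableOn_exp_mul_complex_Ioi (by simp; linarith [le_abs_self b.re]) 0).congr_fun
    (fun _ ht => (cexp_mul_sub_mul_abs_of_pos ht).symm) measurableSet_Ioi

lemma integrableOn_Iic_cexp_mul_sub_mul_abs (hb : |b.re| < c) :
    IntegrableOn (fun t : ℝ => cexp (b * t - c * |t|)) (Iic 0) :=
  (integrableOn_exp_mul_complex_Iic (by simp; linarith [neg_abs_le b.re]) 0).congr_fun
    (fun _ ht => (cexp_mul_sub_mul_abs_of_nonpos ht).symm) measurableSet_Iic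

lemma integrable_cexp_mul_sub_mul_abs (hb : |b.re| < c) :
    Integrable (fun t : ℝ => cexp (b * t - c * |t|)) := by
  rw [← integrableOn_univ, ← Iic_union_Ioi (a := (0 : ℝ))]
  exact (integrableOn_Iic_cexp_mul_sub_mul_abs hb).union (integrableOn_Ioi_cexp_mul_sub_mul_abs hb)

lemma integral_cexp_mul_sub_mul_abs (hb : |b.re| < c) :
    ∫ t : ℝ, cexp (b * t - c * |t|) = 2 * c / (c ^ 2 - b ^ 2) := by
  have hneg : (b - c).re < 0 := by simp; linarith [le_abs_self b.re]
  have hpos : 0 < (b + c).re := by simp; linarith [neg_abs_le b.re]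
  rw [← intervalIntegral.integral_Iic_add_Ioi (integrableOn_Iic_cexp_mul_sub_mul_abs hb)
      (integrableOn_Ioi_cexp_mul_sub_mul_abs hb),
    setIntegral_congr_fun measurableSet_Iic (fun _ ht => cexp_mul_sub_mul_abs_of_nonpos ht),
    setIntegral_congr_fun measurableSet_Ioi (fun _ ht => cexp_mul_sub_mul_abs_of_pos ht),
    integral_exp_mul_complex_Iic hpos, integral_exp_mul_complex_Ioi hneg]
  have h1 : b + c ≠ 0 := fun h => by simp [h] at hpos
  have h2 : b - c ≠ 0 := fun h => by simp [h] at hneg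
  rw [show (c : ℂ) ^ 2 - b ^ 2 = -((b + c) * (b - c)) by ring]
  simp only [Complex.ofReal_zero, mul_zero, Complex.exp_zero]
  field_simp
  ring

lemma integrable_ofReal_exp_neg_mul_abs (hc : 0 < c) :
    Integrable (fun t : ℝ => (rexp (-(c * |t|)) : ℂ)) := by
  simpa using integrable_cexp_mul_sub_mul_abs (b := 0) (by simpa using hc)

lemma fourier_ofReal_exp_neg_mul_abs (hc : 0 < c) (w : ℝ) :
    𝓕 (fun t : ℝ => (rexp (-(c * |t|)) : ℂ)) w = (2 * c / (c ^ 2 + (2 * π * w) ^ 2) : ℝ) := by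
  have hb : |(-(2 * π * w) * I).re| < c := by simpa using hc
  have hintegrand (t : ℝ) : cexp (↑(-2 * π * t * w) * I) • (rexp (-(c * |t|)) : ℂ)
      = cexp (-(2 * π * w) * I * t - c * |t|) := by
    rw [smul_eq_mul, Complex.ofReal_exp, ← Complex.exp_add]
    push_cast
    ring_nf
  simp_rw [Real.fourier_real_eq_integral_exp_smul, hintegrand, integral_cexp_mul_sub_mul_abs hb]
  push_cast
  rw [mul_pow, neg_sq, Complex.I_sq]
  ring

end TwoSidedExponential

lemma integrable_inv_sq_add_sq {x : ℝ} (hx : x ≠ 0) :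
    Integrable (fun t : ℝ => (x ^ 2 + t ^ 2)⁻¹) := by
  have := ((integrable_comp_mul_left_iff _ (inv_ne_zero hx)).mpr
    integrable_inv_one_add_sq).const_mul (x ^ 2)⁻¹
  refine this.congr (.of_forall fun t => ?_)
  field_simp

lemma integral_cos_mul_div_sq_add_sq (a : ℝ) {x : ℝ} (hx : 0 < x) :
    ∫ t : ℝ, cos (a * t) / (x ^ 2 + t ^ 2) = π / x * rexp (-(x * |a|)) := by
  have hc : 0 < 2 * π * x := by positivity
  set f : ℝ → ℂ := fun t => rexp (-(2 * π * x * |t|))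
  let g : ℝ → ℝ := fun w => x / π * (x ^ 2 + w ^ 2)⁻¹
  have h𝓕 : 𝓕 f = fun w => (g w : ℂ) := funext fun w => by
    rw [fourier_ofReal_exp_neg_mul_abs hc]
    simp only [g]
    congr 1
    field_simp
  have hg : Integrable g := (integrable_inv_sq_add_sq hx.ne').const_mul _
  have hinv := (integrable_ofReal_exp_neg_mul_abs hc).fourierInv_fourier_eq
    (h𝓕 ▸ hg.ofReal) (v := a / (2 * π)) (by fun_prop)
  rw [Real.fourierInv_eq', h𝓕] at hinv
  have hphase (v : ℝ) : 2 * π * inner ℝ v (a / (2 * π)) = a * v := by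
    rw [Real.inner_apply]; field_simp
  simp only [hphase, smul_eq_mul] at hinv
  have hint : Integrable fun v : ℝ => cexp (↑(a * v) * I) * g v :=
    hg.ofReal.bdd_mul (c := 1) (by fun_prop)
      (.of_forall fun v => (Complex.norm_exp_ofReal_mul_I _).le)
  have hre := integral_re hint
  rw [hinv] at hre
  simp only [RCLike.re_to_complex, Complex.re_mul_ofReal, Complex.exp_ofReal_mul_I_re,
    Complex.ofReal_re] at hre
  calc ∫ t : ℝ, cos (a * t) / (x ^ 2 + t ^ 2) = π / x * ∫ t : ℝ, cos (a * t) * g t := by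
        rw [← integral_const_mul]
        congr 1 with t
        simp only [g]
        field_simp
    _ = π / x * rexp (-(x * |a|)) := by
        rw [hre, abs_div, abs_of_pos (by positivity : 0 < 2 * π)]
        field_simp

theorem cos_integral (a x : ℝ) (ha : 0 < a) (hx : 0 < x) :
    ∫ t in Set.Ioi (0:ℝ), Real.cos (a * t) / (x ^ 2 + t ^ 2)
      = (Real.pi / (2 * x)) * Real.exp (-a * x) := by
  have heven (t : ℝ) : cos (a * |t|) / (x ^ 2 + |t| ^ 2) = cos (a * t) / (x ^ 2 + t ^ 2) := by
    rcases abs_choice t with h | h <;> simp [h]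
  have h := integral_comp_abs (f := fun t => cos (a * t) / (x ^ 2 + t ^ 2))
  simp only [heven, integral_cos_mul_div_sq_add_sq a hx, abs_of_pos ha] at h
  rw [show π / (2 * x) * rexp (-a * x) = π / x * rexp (-(x * a)) / 2 by ring_nf, h]
  ring
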